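/- Let T be a tree and g a non-elliptic self-embedding of T. For every neighbourhood U of g⁺, and every neighbourhood V of g⁻ if g is hyperbolic (with V = ∅ allowed if g is parabolic), there exists N ∈ ℕ such that g^n maps every vertex of T outside V into U, for all n ≥ N. -/

import Mathlib

open SimpleGraph

variable {V : Type*}

/-- `g` is a self-embedding of `G`: injective and adjacency-preserving. -/
def IsEmb (G : SimpleGraph V) (g : V → V) : Prop :=
  Function.Injective g ∧ ∀ u v : V, G.Adj u v → G.Adj (g u) (g v)

/-- A ray in `G`: a one-way infinite path. -/
structure GRay (G : SimpleGraph V) where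
  f : ℕ → V
  inj : Function.Injective f
  adj : ∀ n, G.Adj (f n) (f (n + 1))

/-- Two rays are equivalent (lie in the same end): for every vertex `v` they have
tails avoiding `v` lying in the same component of `G − v`. -/
def RayEquiv (G : SimpleGraph V) (R S : GRay G) : Prop :=
  ∀ v : V, ∃ m n : ℕ, (∀ i, m ≤ i → R.f i ≠ v) ∧ (∀ j, n ≤ j → S.f j ≠ v) ∧
    ∃ w : G.Walk (R.f m) (S.f n), v ∉ w.support

/-- `g` fixes the end represented by the ray `R`: the image ray is equivalent to `R`. -/
def FixesEnd (G : SimpleGraph V) (g : V → V) (R : GRay G) : Prop :=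
  ∃ S : GRay G, (∀ n, S.f n = g (R.f n)) ∧ RayEquiv G S R

def FixesVertex (g : V → V) : Prop := ∃ v, g v = v

/-- `g` fixes an edge setwise (possibly swapping its endpoints). -/
def FixesEdge (G : SimpleGraph V) (g : V → V) : Prop :=
  ∃ u v : V, G.Adj u v ∧ ((g u = u ∧ g v = v) ∨ (g u = v ∧ g v = u))

/-- `g` fixes setwise a non-empty finite subtree of `G`. -/
def FixesFiniteSubtree (G : SimpleGraph V) (g : V → V) : Prop :=
  ∃ S : Set V, S.Nonempty ∧ S.Finite ∧ (G.induce S).Connected ∧ g '' S = S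

/-- `R` is a ray with `g(R) ⊆ R`; for non-elliptic `g` its end is the direction `g⁺`. -/
def DirectionRay (G : SimpleGraph V) (g : V → V) (R : GRay G) : Prop :=
  ∀ n, ∃ m, g (R.f n) = R.f m

/-- `w` lies in the component of `G − x` containing the end of `R`. -/
def InComp (G : SimpleGraph V) (x : V) (R : GRay G) (w : V) : Prop :=
  ∃ m, (∀ i, m ≤ i → R.f i ≠ x) ∧ ∃ p : G.Walk w (R.f m), x ∉ p.support

/-- A sequence of vertices converges to the end represented by `R`. -/
def ConvergesTo (G : SimpleGraph V) (x : ℕ → V) (R : GRay G) : Prop :=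
  ∀ v : V, ∃ N : ℕ, ∀ n, N ≤ n → InComp G v R (x n)

/-- `M` is a submonoid of `Emb(G)`. -/
def IsEmbMonoid (G : SimpleGraph V) (M : Set (V → V)) : Prop :=
  (∀ g ∈ M, IsEmb G g) ∧ (id ∈ M) ∧ ∀ g ∈ M, ∀ h ∈ M, (g ∘ h) ∈ M

/-- The end of `R` is an accumulation point of the orbit of `v0` under `M`:
every basic neighbourhood of the end of `R` meets the orbit. -/
def InLimitSet (G : SimpleGraph V) (M : Set (V → V)) (v0 : V) (R : GRay G) : Prop :=
  ∀ x : V, ∃ g ∈ M, InComp G x R (g v0)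

/-- A self-embedding is elliptic if it fixes a vertex or an edge. -/
def Elliptic (G : SimpleGraph V) (g : V → V) : Prop := FixesVertex g ∨ FixesEdge G g

/-!
In a tree, `y` lies on the geodesic from `a` to `b` iff `d a y + d y b = d a b`; then every walk
from `a` to `b` passes through `y`, and for any `c` the vertex `y` lies on the geodesic from `a`
to `c` or on that from `c` to `b`. With this, the argument becomes distance arithmetic.

Since `g` fixes no vertex, it translates the direction ray `R` by some `k > 0`. If `g^n w` is
separated from the end of `R` by `u`, then `u = g^n x` for some `x` on the geodesic from `w` to
`R 0`, and `d x (R 0) = d u (R (n k))` grows linearly in `n`.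

In the hyperbolic case, `g` translates a tail of the second ray `Rm` back towards its origin
(translation forwards would make `Rm` equivalent to `R`), so `x` stays at bounded distance from
points of `Rm` that run off to its end. A vertex `v` separating `w` from the end of `Rm` lies
between `w` and `x` or between `x` and those points; either way `n` is bounded.

In the parabolic case, `u` cannot have preimages `x n` under every `g^n`: otherwise the geodesics
from `R 0` to the `x n` converge to a ray which `g` translates backwards, a fixed end other than
that of `R`.
-/

namespace SimpleGraph.IsTree

variable {G : SimpleGraph V} {a b c y z : V}

theorem length_eq_dist (hT : G.IsTree) {p : G.Walk a b} (hp : p.IsPath) :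
    p.length = G.dist a b := by
  obtain ⟨q, hq, hqd⟩ := hT.connected.exists_path_of_dist a b
  have : p = q :=
    congrArg Subtype.val ((hT.isAcyclic.subsingleton_path a b).elim ⟨p, hp⟩ ⟨q, hq⟩)
  rw [this, hqd]

theorem dist_add_dist_of_mem_support (hT : G.IsTree) {p : G.Walk a b} (hp : p.IsPath)
    (hy : y ∈ p.support) : G.dist a y + G.dist y b = G.dist a b := by
  classical
  rw [← hT.length_eq_dist hp, ← hT.length_eq_dist (hp.takeUntil hy),
    ← hT.length_eq_dist (hp.dropUntil hy), ← Walk.length_append, Walk.take_spec]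

theorem mem_support_of_dist_add_dist (hT : G.IsTree) (p : G.Walk a b)
    (h : G.dist a y + G.dist y b = G.dist a b) : y ∈ p.support := by
  classical
  obtain ⟨q₁, -, hq₁⟩ := hT.connected.exists_path_of_dist a y
  obtain ⟨q₂, -, hq₂⟩ := hT.connected.exists_path_of_dist y b
  have hq : (q₁.append q₂).IsPath :=
    Walk.isPath_of_length_eq_dist _ (by rw [Walk.length_append, hq₁, hq₂, h])
  have hbypass : p.bypass = q₁.append q₂ :=
    congrArg Subtype.val ((hT.isAcyclic.subsingleton_path a b).elim ⟨_, p.bypass_isPath⟩ ⟨_, hq⟩)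
  apply p.support_bypass_subset_support
  simp [hbypass]

theorem dist_add_dist_or (hT : G.IsTree) (h : G.dist a y + G.dist y b = G.dist a b) (c : V) :
    G.dist a y + G.dist y c = G.dist a c ∨ G.dist c y + G.dist y b = G.dist c b := by
  obtain ⟨p, hp, -⟩ := hT.connected.exists_path_of_dist a c
  obtain ⟨q, hq, -⟩ := hT.connected.exists_path_of_dist c b
  have hy := hT.mem_support_of_dist_add_dist (p.append q) h
  rcases (Walk.mem_support_append_iff _ _).mp hy with hy | hy
  exacts [.inl (hT.dist_add_dist_of_mem_support hp hy),
    .inr (hT.dist_add_dist_of_mem_support hq hy)]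

theorem dist_add_dist_of_le (hT : G.IsTree) (hy : G.dist a y + G.dist y b = G.dist a b)
    (hz : G.dist a z + G.dist z b = G.dist a b) (h : G.dist a y ≤ G.dist a z) :
    G.dist a y + G.dist y z = G.dist a z := by
  have := dist_comm (G := G) (u := y) (v := z)
  rcases hT.dist_add_dist_or hz y with h' | h' <;> omega

theorem dist_add_dist_of_gromov (hT : G.IsTree) (hy : G.dist a y + G.dist y b = G.dist a b)
    (h : 2 * G.dist a y + G.dist b c < G.dist a b + G.dist a c) :
    G.dist a y + G.dist y c = G.dist a c := by
  have := dist_comm (G := G) (u := b) (v := c)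
  have := dist_comm (G := G) (u := y) (v := c)
  have := hT.connected.dist_triangle (u := a) (v := y) (w := c)
  rcases hT.dist_add_dist_or hy c with h' | h' <;> omega

theorem exists_dist_add_dist (hT : G.IsTree) {j : ℕ} (hj : j ≤ G.dist a b) :
    ∃ y, G.dist a y = j ∧ G.dist a y + G.dist y b = G.dist a b := by
  obtain ⟨p, hp, hlen⟩ := hT.connected.exists_path_of_dist a b
  have hj' : G.dist a (p.getVert j) = j := by
    rw [← hT.length_eq_dist (hp.take j), Walk.take_length]
    omega
  exact ⟨p.getVert j, hj', hT.dist_add_dist_of_mem_support hp (p.getVert_mem_support j)⟩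

end SimpleGraph.IsTree

theorem eq_add_of_injective_of_step {φ : ℕ → ℕ} (hφ : Function.Injective φ)
    (hstep : ∀ i, φ (i + 1) = φ i + 1 ∨ φ i = φ (i + 1) + 1) (i : ℕ) :
    φ i = φ 0 + i := by
  -- a descending step is followed by another one (ascending back would repeat a value),
  -- and an infinite descent is impossible in `ℕ`
  have hdown : ∀ i, φ i = φ (i + 1) + 1 → φ (i + 1) = φ (i + 1 + 1) + 1 := fun i h =>
    (hstep (i + 1)).resolve_left fun h' =>
      absurd (hφ (a₁ := i + 1 + 1) (a₂ := i) (by omega)) (by omega)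
  have hup : ∀ i, φ (i + 1) = φ i + 1 := by
    by_contra! ⟨i, hi⟩
    have hdesc : ∀ j, φ (i + j) = φ (i + j + 1) + 1 := fun j => by
      induction j with
      | zero => exact (hstep i).resolve_left hi
      | succ j ih => exact hdown _ ih
    have : ∀ j, φ (i + j) + j = φ i := fun j => by
      induction j with
      | zero => rfl
      | succ j ih =>
        have := hdesc j
        show φ (i + j + 1) + (j + 1) = φ i
        omega
    have := this (φ i + 1)
    omega
  induction i with
  | zero => rfl
  | succ i ih => rw [hup, ih, add_assoc]

namespace GRay

variable {G : SimpleGraph V}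

def walk (R : GRay G) : (n : ℕ) → G.Walk (R.f 0) (R.f n)
  | 0 => .nil
  | n + 1 => (R.walk n).concat (R.adj n)

theorem support_walk (R : GRay G) (n : ℕ) :
    (R.walk n).support = (List.range (n + 1)).map R.f := by
  induction n with
  | zero => rfl
  | succ n ih => simp [walk, ih, List.range_succ (n := n + 1)]

theorem length_walk (R : GRay G) (n : ℕ) : (R.walk n).length = n := by
  induction n with
  | zero => rfl
  | succ n ih => rw [walk, Walk.length_concat, ih]

theorem isPath_walk (R : GRay G) (n : ℕ) : (R.walk n).IsPath :=
  .mk' (by rw [support_walk]; exact List.nodup_range.map R.inj)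

def tail (R : GRay G) (a : ℕ) : GRay G :=
  ⟨fun n => R.f (a + n), fun _ _ h => by simpa using R.inj h, fun n => R.adj (a + n)⟩

def map (R : GRay G) {g : V → V} (hg : IsEmb G g) : GRay G :=
  ⟨g ∘ R.f, hg.1.comp R.inj, fun n => hg.2 _ _ (R.adj n)⟩

theorem dist_zero (hT : G.IsTree) (R : GRay G) (n : ℕ) : G.dist (R.f 0) (R.f n) = n := by
  rw [← hT.length_eq_dist (R.isPath_walk n), length_walk]

theorem dist_of_le (hT : G.IsTree) (R : GRay G) {i j : ℕ} (h : i ≤ j) :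
    G.dist (R.f i) (R.f j) = j - i := by
  simpa [tail, Nat.add_sub_cancel' h] using (R.tail i).dist_zero hT (j - i)

theorem le_dist_add_dist (hT : G.IsTree) (R : GRay G) (i : ℕ) (y : V) :
    i ≤ G.dist (R.f 0) y + G.dist y (R.f i) := by
  have := hT.connected.dist_triangle (u := R.f 0) (v := y) (w := R.f i)
  rwa [R.dist_zero hT] at this

theorem ne_of_dist_lt (hT : G.IsTree) (R : GRay G) {v : V} {i : ℕ}
    (h : G.dist (R.f 0) v < i) : R.f i ≠ v := by
  rintro rfl
  rw [R.dist_zero hT] at h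
  omega

theorem exists_forall_ne (R : GRay G) (v : V) : ∃ m, ∀ i, m ≤ i → R.f i ≠ v := by
  by_cases h : ∃ j, R.f j = v
  · obtain ⟨j, rfl⟩ := h
    exact ⟨j + 1, fun i hi he => by have := R.inj he; omega⟩
  · exact ⟨0, fun i _ he => h ⟨i, he⟩⟩

theorem mem_range_of_dist_add_dist (hT : G.IsTree) (R : GRay G) {y : V} {n : ℕ}
    (h : G.dist (R.f 0) y + G.dist y (R.f n) = G.dist (R.f 0) (R.f n)) : y ∈ Set.range R.f := by
  have := hT.mem_support_of_dist_add_dist (R.walk n) h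
  rw [support_walk, List.mem_map] at this
  obtain ⟨i, -, hi⟩ := this
  exact ⟨i, hi⟩

theorem dist_add_dist_of_dist_lt (hT : G.IsTree) (R : GRay G) {u : V} {i j : ℕ}
    (hu : G.dist (R.f 0) u < i) (hij : i ≤ j) :
    G.dist u (R.f i) + G.dist (R.f i) (R.f j) = G.dist u (R.f j) := by
  have hray : G.dist (R.f 0) (R.f i) + G.dist (R.f i) (R.f j) = G.dist (R.f 0) (R.f j) := by
    rw [R.dist_zero hT, R.dist_zero hT, R.dist_of_le hT hij]
    omega
  refine (hT.dist_add_dist_or hray u).resolve_left fun h => ?_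
  rw [R.dist_zero hT] at h
  omega

theorem exists_add_of_range_subset (hT : G.IsTree) {P Q : GRay G}
    (h : Set.range P.f ⊆ Set.range Q.f) : ∃ c, ∀ i, P.f i = Q.f (c + i) := by
  choose φ hφ using fun i => h ⟨i, rfl⟩
  have hinj : Function.Injective φ := fun i j hij => P.inj (by rw [← hφ, ← hφ, hij])
  have hstep (i : ℕ) : φ (i + 1) = φ i + 1 ∨ φ i = φ (i + 1) + 1 := by
    have hadj := P.adj i
    rw [← hφ, ← hφ, ← dist_eq_one_iff_adj] at hadj
    rcases le_total (φ i) (φ (i + 1)) with hle | hle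
    · rw [Q.dist_of_le hT hle] at hadj; omega
    · rw [dist_comm, Q.dist_of_le hT hle] at hadj; omega
  exact ⟨φ 0, fun i => by rw [← hφ, eq_add_of_injective_of_step hinj hstep i]⟩

theorem rayEquiv_of_tail_eq {P Q : GRay G} {a b : ℕ} (h : ∀ r, P.f (a + r) = Q.f (b + r)) :
    RayEquiv G P Q := by
  intro v
  obtain ⟨mP, hmP⟩ := P.exists_forall_ne v
  obtain ⟨mQ, hmQ⟩ := Q.exists_forall_ne v
  refine ⟨a + (mP + mQ), b + (mP + mQ), fun i hi => hmP i (by omega),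
    fun i hi => hmQ i (by omega), Walk.nil.copy rfl (h _), ?_⟩
  simpa [eq_comm] using hmP (a + (mP + mQ)) (by omega)

end GRay

theorem RayEquiv.exists_tail_eq {G : SimpleGraph V} (hT : G.IsTree) {P Q : GRay G}
    (h : RayEquiv G P Q) :
    ∃ a b, ∀ r, P.f (a + r) = Q.f (b + r) := by
  set D := G.dist (P.f 0) (Q.f 0)
  -- for `j > D`, `P.f j` lies on the geodesic from `Q.f 0` to the tail of `P`; since the tail
  -- of `Q` reaches that of `P` avoiding `P.f j`, it lies on the geodesic from `Q.f 0` along `Q`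
  have hmem : ∀ j, D < j → P.f j ∈ Set.range Q.f := by
    intro j hj
    obtain ⟨m, n, hm, -, w, hw⟩ := h (P.f j)
    have hjm : j < m := by
      by_contra hjm
      exact hm j (by omega) rfl
    have hP : G.dist (P.f 0) (P.f j) + G.dist (P.f j) (P.f m) = G.dist (P.f 0) (P.f m) := by
      rw [P.dist_zero hT, P.dist_zero hT, P.dist_of_le hT hjm.le]
      omega
    have hQP := (hT.dist_add_dist_or hP (Q.f 0)).resolve_left fun h' => by
      rw [P.dist_zero hT] at h'
      omega
    rcases hT.dist_add_dist_or hQP (Q.f n) with hQ | hQ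
    · exact Q.mem_range_of_dist_add_dist hT hQ
    · exact absurd (hT.mem_support_of_dist_add_dist w.reverse hQ) (by simpa using hw)
  obtain ⟨c, hc⟩ := (P.tail (D + 1)).exists_add_of_range_subset hT <| by
    rintro _ ⟨i, rfl⟩
    exact hmem _ (by omega)
  exact ⟨D + 1, c, hc⟩

namespace IsEmb

variable {G : SimpleGraph V} {g : V → V}

theorem iterate (hg : IsEmb G g) (n : ℕ) : IsEmb G g^[n] := by
  induction n with
  | zero => exact ⟨Function.injective_id, fun _ _ h => h⟩
  | succ n ih =>
    rw [Function.iterate_succ']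
    exact ⟨hg.1.comp ih.1, fun u v h => hg.2 _ _ (ih.2 u v h)⟩

def toHom (hg : IsEmb G g) : G →g G := ⟨g, hg.2 _ _⟩

theorem dist_eq (hg : IsEmb G g) (hT : G.IsTree) (a b : V) : G.dist (g a) (g b) = G.dist a b := by
  obtain ⟨p, hp, hlen⟩ := hT.connected.exists_path_of_dist a b
  change G.dist (hg.toHom a) (hg.toHom b) = _
  rw [← hT.length_eq_dist (hp.map (f := hg.toHom) hg.1), Walk.length_map, hlen]

end IsEmb

theorem iterate_apply_eq_of_shift {α : Type*} {g : α → α} {f : ℕ → α} {a k : ℕ}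
    (h : ∀ i, a ≤ i → g (f i) = f (i + k)) (n : ℕ) {i : ℕ} (hi : a ≤ i) :
    g^[n] (f i) = f (i + n * k) := by
  induction n with
  | zero => simp
  | succ n ih => rw [Function.iterate_succ_apply', ih, h _ (by omega), add_mul, one_mul, add_assoc]

theorem iterate_apply_eq_of_backShift {α : Type*} {g : α → α} {f : ℕ → α} {a k : ℕ}
    (h : ∀ i, a ≤ i → g (f (i + k)) = f i) (n : ℕ) {i : ℕ} (hi : a ≤ i) :
    g^[n] (f (i + n * k)) = f i := by
  induction n with
  | zero => simp
  | succ n ih =>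
    rw [Function.iterate_succ_apply, add_mul, one_mul, ← add_assoc, h _ (by omega), ih]

section Dynamics

variable {G : SimpleGraph V} {g : V → V}

theorem DirectionRay.exists_shift (hT : G.IsTree) (hg : IsEmb G g) (hfix : ¬ FixesVertex g)
    {R : GRay G} (hR : DirectionRay G g R) : ∃ k, 0 < k ∧ ∀ i, g (R.f i) = R.f (i + k) := by
  obtain ⟨c, hc⟩ := (R.map hg).exists_add_of_range_subset hT <| by
    rintro _ ⟨i, rfl⟩
    obtain ⟨m, hm⟩ := hR i
    exact ⟨m, hm.symm⟩
  refine ⟨c, Nat.pos_of_ne_zero fun hc0 => hfix ⟨R.f 0, ?_⟩, fun i => ?_⟩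
  · simpa [GRay.map, hc0] using hc 0
  · rw [add_comm]
    exact hc i

/-- The distance between `g^n`-translates of base points of `P` and `Q` stays constant while both
run off to infinity. -/
theorem rayEquiv_of_shift (hT : G.IsTree) (hg : IsEmb G g) {P Q : GRay G} {a b k l : ℕ}
    (hk : 0 < k) (hl : 0 < l) (hP : ∀ i, a ≤ i → g (P.f i) = P.f (i + k))
    (hQ : ∀ i, b ≤ i → g (Q.f i) = Q.f (i + l)) : RayEquiv G P Q := by
  intro v
  set n := a + b + G.dist (P.f a) (Q.f b) + G.dist (P.f 0) v + G.dist (Q.f 0) v + 1 with hn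
  have hnk : n ≤ n * k := Nat.le_mul_of_pos_right n hk
  have hnl : n ≤ n * l := Nat.le_mul_of_pos_right n hl
  have hdist : G.dist (P.f (a + n * k)) (Q.f (b + n * l)) = G.dist (P.f a) (Q.f b) := by
    rw [← iterate_apply_eq_of_shift hP n le_rfl, ← iterate_apply_eq_of_shift hQ n le_rfl,
      (hg.iterate n).dist_eq hT]
  obtain ⟨p, hp, -⟩ := hT.connected.exists_path_of_dist (P.f (a + n * k)) (Q.f (b + n * l))
  refine ⟨a + n * k, b + n * l, fun i hi => P.ne_of_dist_lt hT (by omega),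
    fun i hi => Q.ne_of_dist_lt hT (by omega), p, fun hv => ?_⟩
  have := hT.dist_add_dist_of_mem_support hp hv
  have := P.le_dist_add_dist hT (a + n * k) v
  have := dist_comm (G := G) (u := v) (v := P.f (a + n * k))
  omega

theorem FixesEnd.exists_backShift (hT : G.IsTree) (hg : IsEmb G g) (hfix : ¬ FixesVertex g)
    {R Rm : GRay G} {k : ℕ} (hk : 0 < k) (hR : ∀ i, g (R.f i) = R.f (i + k))
    (hRm : FixesEnd G g Rm) (hRmR : ¬ RayEquiv G Rm R) :
    ∃ b l, 0 < l ∧ ∀ i, b ≤ i → g (Rm.f (i + l)) = Rm.f i := by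
  obtain ⟨S, hS, hSRm⟩ := hRm
  obtain ⟨a, b, hab⟩ := hSRm.exists_tail_eq hT
  have hgab (r : ℕ) : g (Rm.f (a + r)) = Rm.f (b + r) := by rw [← hS, hab]
  rcases lt_trichotomy a b with hlt | rfl | hgt
  · refine absurd (rayEquiv_of_shift hT hg (a := a) (b := 0) (Nat.sub_pos_of_lt hlt) hk ?_
      fun i _ => hR i) hRmR
    intro i hi
    obtain ⟨r, rfl⟩ := Nat.exists_eq_add_of_le hi
    rw [hgab]
    congr 1
    omega
  · exact absurd ⟨Rm.f a, by simpa using hgab 0⟩ hfix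
  · refine ⟨b, a - b, by omega, fun i hi => ?_⟩
    obtain ⟨r, rfl⟩ := Nat.exists_eq_add_of_le hi
    rw [show b + r + (a - b) = a + r by omega, hgab]

theorem dist_add_dist_of_not_inComp (hT : G.IsTree) {x w : V} {R : GRay G} {m : ℕ}
    (h : ¬ InComp G x R w) (hm : ∀ i, m ≤ i → R.f i ≠ x) :
    G.dist w x + G.dist x (R.f m) = G.dist w (R.f m) := by
  by_contra hne
  obtain ⟨p, hp, -⟩ := hT.connected.exists_path_of_dist w (R.f m)
  exact h ⟨m, hm, p, fun hx => hne (hT.dist_add_dist_of_mem_support hp hx)⟩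

theorem exists_iterate_eq_of_not_inComp (hT : G.IsTree) (hg : IsEmb G g) {R : GRay G} {k : ℕ}
    (hR : ∀ i, g (R.f i) = R.f (i + k)) {u w : V} {n : ℕ} (hn : G.dist (R.f 0) u < n * k)
    (h : ¬ InComp G u R (g^[n] w)) :
    ∃ x, g^[n] x = u ∧ G.dist w x + G.dist x (R.f 0) = G.dist w (R.f 0) := by
  have hRn : g^[n] (R.f 0) = R.f (n * k) := by
    simpa using iterate_apply_eq_of_shift (fun i _ => hR i) n (i := 0) le_rfl
  have hu := dist_add_dist_of_not_inComp hT h (m := n * k)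
    fun i hi => R.ne_of_dist_lt hT (by omega)
  obtain ⟨p, hp, -⟩ := hT.connected.exists_path_of_dist w (R.f 0)
  rw [← hRn] at hu
  have := hT.mem_support_of_dist_add_dist (p.map (hg.iterate n).toHom) hu
  rw [Walk.support_map, List.mem_map] at this
  obtain ⟨x, hx, hxu⟩ := this
  exact ⟨x, hxu, hT.dist_add_dist_of_mem_support hp hx⟩

theorem exists_forall_inComp_iterate_of_backShift (hT : G.IsTree) (hg : IsEmb G g)
    {R Rm : GRay G} {k b l : ℕ} (hk : 0 < k) (hR : ∀ i, g (R.f i) = R.f (i + k)) (hl : 0 < l)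
    (hRm : ∀ i, b ≤ i → g (Rm.f (i + l)) = Rm.f i) (u v : V) :
    ∃ N, ∀ n, N ≤ n → ∀ w, ¬ InComp G v Rm w → InComp G u R (g^[n] w) := by
  refine ⟨G.dist (R.f 0) u + G.dist (R.f 0) v + G.dist (Rm.f 0) u + G.dist (Rm.f 0) v + b + 1,
    fun n hn w hvw => by_contra fun hu => ?_⟩
  have hnk : n ≤ n * k := Nat.le_mul_of_pos_right n hk
  have hnl : n ≤ n * l := Nat.le_mul_of_pos_right n hl
  obtain ⟨x, hxu, hwx⟩ := exists_iterate_eq_of_not_inComp hT hg hR (by omega) hu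
  have hwv := dist_add_dist_of_not_inComp hT hvw (m := b + n * l)
    fun i hi => Rm.ne_of_dist_lt hT (by omega)
  have hxR : G.dist x (R.f 0) = G.dist u (R.f (n * k)) := by
    have hRn : g^[n] (R.f 0) = R.f (n * k) := by
      simpa using iterate_apply_eq_of_shift (fun i _ => hR i) n (i := 0) le_rfl
    rw [← hxu, ← (hg.iterate n).dist_eq hT, hRn]
  have hxRm : G.dist x (Rm.f (b + n * l)) = G.dist u (Rm.f b) := by
    rw [← hxu, ← (hg.iterate n).dist_eq hT, iterate_apply_eq_of_backShift hRm n le_rfl]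
  rcases hT.dist_add_dist_or hwv x with h | h
  · have := hT.connected.dist_triangle (u := w) (v := v) (w := R.f 0)
    have := R.le_dist_add_dist hT (n * k) u
    have := dist_comm (G := G) (u := v) (v := R.f 0)
    omega
  · have := Rm.le_dist_add_dist hT (b + n * l) v
    have := hT.connected.dist_triangle (u := u) (v := Rm.f 0) (w := Rm.f b)
    have := Rm.dist_zero hT b
    have := dist_comm (G := G) (u := u) (v := Rm.f 0)
    omega

theorem iterate_add_preimage {α : Type*} {g : α → α} (hg : Function.Injective g) {x : ℕ → α}
    {u : α} (hx : ∀ n, g^[n] (x n) = u) (n m : ℕ) : g^[n] (x (n + m)) = x m :=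
  hg.iterate m (by rw [← Function.iterate_add_apply, add_comm m n, hx, hx])

section Preimages

variable {R : GRay G} {k : ℕ} {u : V} {x : ℕ → V}

theorem dist_ray_preimage (hT : G.IsTree) (hg : IsEmb G g) (hR : ∀ i, g (R.f i) = R.f (i + k))
    (hx : ∀ n, g^[n] (x n) = u) (i n : ℕ) :
    G.dist (R.f i) (x n) = G.dist (R.f (i + n * k)) u := by
  rw [← (hg.iterate n).dist_eq hT, iterate_apply_eq_of_shift (fun i _ => hR i) n (Nat.zero_le i),
    hx]

theorem dist_ray_preimage_eq_add (hT : G.IsTree) (hg : IsEmb G g)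
    (hR : ∀ i, g (R.f i) = R.f (i + k)) (hx : ∀ n, g^[n] (x n) = u) {n : ℕ}
    (hn : G.dist (R.f 0) u < n * k) (i : ℕ) :
    G.dist (R.f i) (x n) = i + G.dist (R.f 0) (x n) := by
  have := R.dist_add_dist_of_dist_lt hT hn (j := i + n * k) (by omega)
  rw [R.dist_of_le hT (by omega)] at this
  rw [dist_ray_preimage hT hg hR hx, dist_ray_preimage hT hg hR hx, zero_add, dist_comm,
    dist_comm (G := G) (u := R.f (n * k))]
  omega

/-- The preimages `x n` escape from `R` at linear speed while `dist (x n) (x m)` only grows like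
`|n - m| * k`, so the geodesics from `R.f 0` to them share ever longer initial segments. -/
theorem two_mul_add_dist_preimage_lt (hT : G.IsTree) (hg : IsEmb G g)
    (hR : ∀ i, g (R.f i) = R.f (i + k)) (hx : ∀ n, g^[n] (x n) = u) {j n m : ℕ}
    (hn : j + 2 * G.dist (R.f 0) u < n * k) (hm : j + 2 * G.dist (R.f 0) u < m * k) :
    2 * j + G.dist (x n) (x m) < G.dist (R.f 0) (x n) + G.dist (R.f 0) (x m) := by
  wlog hnm : n ≤ m generalizing n m
  · have := this hm hn (by omega)
    rw [dist_comm]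
    omega
  obtain ⟨m, rfl⟩ := Nat.exists_eq_add_of_le hnm
  have hxx : G.dist (x n) (x (n + m)) = G.dist u (x m) := by
    rw [← (hg.iterate n).dist_eq hT, hx, iterate_add_preimage hg.1 hx]
  have h0 (n : ℕ) : G.dist (R.f 0) (x n) = G.dist u (R.f (n * k)) := by
    rw [dist_ray_preimage hT hg hR hx, zero_add, dist_comm]
  have := h0 n
  have := h0 m
  have := h0 (n + m)
  have := hT.connected.dist_triangle (u := u) (v := R.f 0) (w := x m)
  have := hT.connected.dist_triangle (u := u) (v := R.f 0) (w := R.f (m * k))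
  have := R.dist_zero hT (m * k)
  have := R.le_dist_add_dist hT (n * k) u
  have := R.le_dist_add_dist hT ((n + m) * k) u
  have := dist_comm (G := G) (u := u) (v := R.f 0)
  have := add_mul n m k
  omega

theorem exists_ray_dist_add_dist_preimage (hT : G.IsTree) (hg : IsEmb G g) (hk : 0 < k)
    (hR : ∀ i, g (R.f i) = R.f (i + k)) (hx : ∀ n, g^[n] (x n) = u) :
    ∃ S : GRay G, (∀ j, G.dist (R.f 0) (S.f j) = j) ∧ ∀ j n, j + 2 * G.dist (R.f 0) u < n * k →
      G.dist (R.f 0) (S.f j) + G.dist (S.f j) (x n) = G.dist (R.f 0) (x n) := by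
  set D := G.dist (R.f 0) u
  have hN (j : ℕ) : j + 2 * D < (j + 2 * D + 1) * k :=
    Nat.lt_of_lt_of_le (Nat.lt_succ_self _) (Nat.le_mul_of_pos_right _ hk)
  have hex (j : ℕ) : ∃ y, G.dist (R.f 0) y = j ∧ ∀ n, j + 2 * D < n * k →
      G.dist (R.f 0) y + G.dist y (x n) = G.dist (R.f 0) (x n) := by
    have hj := two_mul_add_dist_preimage_lt hT hg hR hx (hN j) (hN j)
    rw [dist_self] at hj
    obtain ⟨y, hy, hyx⟩ :=
      hT.exists_dist_add_dist (j := j) (a := R.f 0) (b := x (j + 2 * D + 1)) (by omega)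
    refine ⟨y, hy, fun n hn => hT.dist_add_dist_of_gromov hyx ?_⟩
    rw [hy]
    exact two_mul_add_dist_preimage_lt hT hg hR hx (hN j) hn
  choose s hs hsx using hex
  refine ⟨⟨s, fun i j hij => by rw [← hs i, ← hs j, hij], fun j => ?_⟩, hs, hsx⟩
  have h := hT.dist_add_dist_of_le (hsx j _ (by have := hN (j + 1); omega))
    (hsx (j + 1) _ (hN _)) (by rw [hs, hs]; omega)
  rw [hs, hs] at h
  exact dist_eq_one_iff_adj.mp (by omega)

theorem apply_add_eq_of_dist_add_dist_preimage (hT : G.IsTree) (hg : IsEmb G g) (hk : 0 < k)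
    (hR : ∀ i, g (R.f i) = R.f (i + k)) (hx : ∀ n, g^[n] (x n) = u) {s : ℕ → V}
    (hs : ∀ j, G.dist (R.f 0) (s j) = j)
    (hsx : ∀ j n, j + 2 * G.dist (R.f 0) u < n * k →
      G.dist (R.f 0) (s j) + G.dist (s j) (x n) = G.dist (R.f 0) (x n)) (j : ℕ) :
    g (s (j + k)) = s j := by
  set n := j + k + 2 * G.dist (R.f 0) u + 1
  have hnk : n ≤ n * k := Nat.le_mul_of_pos_right n hk
  have hgx : g (x (n + 1)) = x n := by simpa [add_comm] using iterate_add_preimage hg.1 hx 1 n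
  have hgR : g (R.f 0) = R.f k := by simpa using hR 0
  -- both `g (s (j + k))` and `s j` lie on the geodesic from `R.f 0` to `x n`, at distance `j`
  have hy : G.dist (R.f k) (g (s (j + k))) + G.dist (g (s (j + k))) (x n) =
      G.dist (R.f k) (x n) := by
    have := hsx (j + k) (n + 1) (by rw [add_mul]; omega)
    rwa [← hg.dist_eq hT, ← hg.dist_eq hT (s _), ← hg.dist_eq hT (R.f 0) (x (n + 1)), hgR, hgx]
      at this
  have hky : G.dist (R.f k) (g (s (j + k))) = j + k := by rw [← hgR, hg.dist_eq hT, hs]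
  have hR0 : G.dist (R.f k) (R.f 0) + G.dist (R.f 0) (x n) = G.dist (R.f k) (x n) := by
    rw [dist_ray_preimage_eq_add hT hg hR hx (by omega) k, dist_comm, R.dist_zero hT]
  have hk0 : G.dist (R.f k) (R.f 0) = k := by rw [dist_comm, R.dist_zero hT]
  have h0y := hT.dist_add_dist_of_le hR0 hy (by omega)
  have hsy := hT.dist_add_dist_of_le (b := x n) (z := g (s (j + k))) (hsx j n (by omega))
    (by omega) (by rw [hs]; omega)
  rw [hs] at hsy
  exact ((hT.connected.dist_eq_zero_iff).mp (by omega)).symm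

theorem not_rayEquiv_of_dist_add_dist_preimage (hT : G.IsTree) (hg : IsEmb G g) (hk : 0 < k)
    (hR : ∀ i, g (R.f i) = R.f (i + k)) (hx : ∀ n, g^[n] (x n) = u) {S : GRay G}
    (hSx : ∀ j n, j + 2 * G.dist (R.f 0) u < n * k →
      G.dist (R.f 0) (S.f j) + G.dist (S.f j) (x n) = G.dist (R.f 0) (x n)) :
    ¬ RayEquiv G S R := by
  intro h
  obtain ⟨a, b, hab⟩ := h.exists_tail_eq hT
  set n := a + 1 + 2 * G.dist (R.f 0) u + 1
  have hnk : n ≤ n * k := Nat.le_mul_of_pos_right n hk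
  have := hSx (a + 1) n (by omega)
  rw [hab 1, dist_ray_preimage_eq_add hT hg hR hx (by omega), R.dist_zero hT] at this
  omega

theorem exists_fixesEnd_not_rayEquiv_of_preimage (hT : G.IsTree) (hg : IsEmb G g) (hk : 0 < k)
    (hR : ∀ i, g (R.f i) = R.f (i + k)) (hx : ∀ n, g^[n] (x n) = u) :
    ∃ S : GRay G, FixesEnd G g S ∧ ¬ RayEquiv G S R := by
  obtain ⟨S, hS, hSx⟩ := exists_ray_dist_add_dist_preimage hT hg hk hR hx
  refine ⟨S, ⟨S.map hg, fun _ => rfl, GRay.rayEquiv_of_tail_eq (a := k) (b := 0) fun r => ?_⟩,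
    not_rayEquiv_of_dist_add_dist_preimage hT hg hk hR hx hSx⟩
  simpa [GRay.map, add_comm k r] using
    apply_add_eq_of_dist_add_dist_preimage hT hg hk hR hx hS hSx r

end Preimages

theorem exists_forall_inComp_iterate_of_forall_rayEquiv (hT : G.IsTree) (hg : IsEmb G g)
    {R : GRay G} {k : ℕ} (hk : 0 < k) (hR : ∀ i, g (R.f i) = R.f (i + k))
    (hpar : ∀ S : GRay G, FixesEnd G g S → RayEquiv G S R) (u : V) :
    ∃ N, ∀ n, N ≤ n → ∀ w, InComp G u R (g^[n] w) := by
  by_cases hsurj : ∀ n, ∃ y, g^[n] y = u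
  · choose x hx using hsurj
    obtain ⟨S, hS, hSR⟩ := exists_fixesEnd_not_rayEquiv_of_preimage hT hg hk hR hx
    exact absurd (hpar S hS) hSR
  · push Not at hsurj
    obtain ⟨n₀, hn₀⟩ := hsurj
    refine ⟨n₀ + G.dist (R.f 0) u + 1, fun n hn w => by_contra fun hu => ?_⟩
    have hnk : n ≤ n * k := Nat.le_mul_of_pos_right n hk
    obtain ⟨x, hxu, -⟩ := exists_iterate_eq_of_not_inComp hT hg hR (by omega) hu
    refine hn₀ (g^[n - n₀] x) ?_
    rwa [← Function.iterate_add_apply, Nat.add_sub_cancel' (by omega)]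

end Dynamics

theorem stmt18 (G : SimpleGraph V) (hT : G.IsTree) (g : V → V) (hg : IsEmb G g)
    (hne : ¬ Elliptic G g) (Rp : GRay G) (hRp : DirectionRay G g Rp) :
    -- hyperbolic case: a second fixed end `g⁻`, neighbourhoods given by vertices `xu`, `xv`
    (∀ Rm : GRay G, FixesEnd G g Rm → ¬ RayEquiv G Rm Rp → ∀ xu xv : V,
      ∃ N : ℕ, ∀ n, N ≤ n → ∀ w : V, ¬ InComp G xv Rm w → InComp G xu Rp (g^[n] w)) ∧
    -- parabolic case (`V = ∅`): every vertex is eventually mapped into `U`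
    ((∀ S : GRay G, FixesEnd G g S → RayEquiv G S Rp) → ∀ xu : V,
      ∃ N : ℕ, ∀ n, N ≤ n → ∀ w : V, InComp G xu Rp (g^[n] w)) := by
  have hfix : ¬ FixesVertex g := fun h => hne (.inl h)
  obtain ⟨k, hk, hR⟩ := hRp.exists_shift hT hg hfix
  refine ⟨fun Rm hRm hRmR xu xv => ?_, fun hpar xu => ?_⟩
  · obtain ⟨b, l, hl, hback⟩ := hRm.exists_backShift hT hg hfix hk hR hRmR
    exact exists_forall_inComp_iterate_of_backShift hT hg hk hR hl hback xu xv
  · exact exists_forall_inComp_iterate_of_forall_rayEquiv hT hg hk hR hpar xu
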